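/- arXiv:0803.3111 — 3 statements merged into one kernel-verified Lean document; each statement's English description precedes it below -/
import Mathlib

section
/- For any real numbers x_0, ..., x_{n-1}, the operator norm of the n×n symmetric Toeplitz matrix T_n = [x_{|i-j|}] satisfies ‖T_n‖ ≥ sup_{t∈[0,1]} |x_0 + Σ_{j=1}^{n-1} 2(1 - j/n)·x_j·cos(2πjt)|. -/
open MeasureTheory ProbabilityTheory Filter Real

/-- Operator (spectral) norm of a real matrix acting on Euclidean space. -/
noncomputable def opNorm {n : ℕ} (A : Matrix (Fin n) (Fin n) ℝ) : ℝ :=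
  ‖LinearMap.toContinuousLinearMap (Matrix.toEuclideanLin A)‖

/-- The symmetric Toeplitz matrix generated by `x 0, …, x (n-1)`. -/
noncomputable def toeplitz (n : ℕ) (x : ℕ → ℝ) : Matrix (Fin n) (Fin n) ℝ :=
  fun i j => x (Nat.dist i j)

open Finset
open scoped RealInnerProductSpace

/-!
For `θ ∈ ℝ` put `c k = cos (k θ)` and `s k = sin (k θ)`, the real and imaginary parts of the
Fourier vector `e^{i k θ}`. Since `cos (k θ) cos (l θ) + sin (k θ) sin (l θ) = cos (|k - l| θ)`,
the quadratic forms add up to `⟪c, T c⟫ + ⟪s, T s⟫ = ∑ₖ ∑ₗ x_{|k-l|} cos (|k - l| θ)`, and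
counting the `n - j` pairs at each distance `j` turns this into `n` times the Fejér mean
`x₀ + ∑ⱼ 2 (1 - j/n) xⱼ cos (j θ)`. As `‖c‖² + ‖s‖² = n` and `|⟪v, T v⟫| ≤ ‖T‖ ‖v‖²`, the Fejér
mean is bounded by `‖T‖` at every `θ`, in particular at `θ = 2πt`.
-/

lemma abs_inner_self_apply_le {E : Type*} [NormedAddCommGroup E] [InnerProductSpace ℝ E]
    (L : E →L[ℝ] E) (v : E) : |⟪v, L v⟫| ≤ ‖L‖ * ‖v‖ ^ 2 :=
  calc |⟪v, L v⟫| ≤ ‖v‖ * ‖L v‖ := abs_real_inner_le_norm v (L v)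
    _ ≤ ‖v‖ * (‖L‖ * ‖v‖) := by gcongr; exact L.le_opNorm v
    _ = ‖L‖ * ‖v‖ ^ 2 := by ring

lemma sum_range_dist_eq_sum_Ico {M : Type*} [AddCommMonoid M] (n : ℕ) (g : ℕ → M) :
    ∑ k ∈ range n, g (Nat.dist n k) = ∑ j ∈ Ico 1 (n + 1), g j := by
  rw [range_eq_Ico, show Ico 1 (n + 1) = Ico (n + 1 - n) (n + 1 - 0) by simp,
    ← sum_Ico_reflect g 0 n.le_succ]
  refine sum_congr rfl fun k hk => ?_
  rw [Nat.dist_eq_sub_of_le_right (mem_Ico.1 hk).2.le]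

lemma sum_range_sum_range_dist {M : Type*} [AddCommMonoid M] (n : ℕ) (g : ℕ → M) :
    ∑ k ∈ range n, ∑ l ∈ range n, g (Nat.dist k l)
      = n • g 0 + ∑ j ∈ Ico 1 n, (2 * (n - j)) • g j := by
  induction n with
  | zero => simp
  | succ n ih =>
    have hsucc : ∑ k ∈ range (n + 1), ∑ l ∈ range (n + 1), g (Nat.dist k l)
        = ∑ k ∈ range n, ∑ l ∈ range n, g (Nat.dist k l)
          + 2 • ∑ j ∈ Ico 1 (n + 1), g j + g 0 := by
      simp only [sum_range_succ, sum_add_distrib, Nat.dist_self,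
        ← sum_range_dist_eq_sum_Ico, Nat.dist_comm _ n]
      abel
    have hweights : ∑ j ∈ Ico 1 (n + 1), (2 * (n + 1 - j)) • g j
        = ∑ j ∈ Ico 1 n, (2 * (n - j)) • g j + 2 • ∑ j ∈ Ico 1 (n + 1), g j := by
      have hdrop : ∑ j ∈ Ico 1 (n + 1), (2 * (n - j)) • g j
          = ∑ j ∈ Ico 1 n, (2 * (n - j)) • g j :=
        (sum_subset (Ico_subset_Ico_right n.le_succ) fun j hj hjn => by
          obtain rfl : j = n := by simp only [mem_Ico] at hj hjn; omega
          simp).symm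
      rw [← hdrop, smul_sum, ← sum_add_distrib]
      refine sum_congr rfl fun j hj => ?_
      rw [← add_smul]
      congr 1
      have := (mem_Ico.1 hj).2
      omega
    rw [hsucc, ih, hweights, succ_nsmul _ n]
    abel

lemma cos_dist_mul (k l : ℕ) (θ : ℝ) :
    cos (Nat.dist k l * θ) = cos (k * θ) * cos (l * θ) + sin (k * θ) * sin (l * θ) := by
  rw [← cos_sub]
  rcases le_total k l with h | h
  · rw [Nat.dist_eq_sub_of_le h, Nat.cast_sub h, ← cos_neg]
    ring_nf
  · rw [Nat.dist_eq_sub_of_le_right h, Nat.cast_sub h]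
    ring_nf

noncomputable def cosVec (n : ℕ) (θ : ℝ) : EuclideanSpace ℝ (Fin n) :=
  WithLp.toLp 2 fun k => cos (k * θ)

noncomputable def sinVec (n : ℕ) (θ : ℝ) : EuclideanSpace ℝ (Fin n) :=
  WithLp.toLp 2 fun k => sin (k * θ)

lemma norm_cosVec_sq_add_norm_sinVec_sq (n : ℕ) (θ : ℝ) :
    ‖cosVec n θ‖ ^ 2 + ‖sinVec n θ‖ ^ 2 = n := by
  simp [EuclideanSpace.real_norm_sq_eq, cosVec, sinVec, ← sum_add_distrib]

lemma inner_cosVec_add_inner_sinVec {n : ℕ} (A : Matrix (Fin n) (Fin n) ℝ) (θ : ℝ) :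
    ⟪cosVec n θ, Matrix.toEuclideanLin A (cosVec n θ)⟫
        + ⟪sinVec n θ, Matrix.toEuclideanLin A (sinVec n θ)⟫
      = ∑ k, ∑ l, A k l * cos (Nat.dist k l * θ) := by
  simp only [cosVec, sinVec, Matrix.toLpLin_apply, EuclideanSpace.inner_eq_star_dotProduct,
    cos_dist_mul]
  simp only [Matrix.mulVec, dotProduct, star_trivial, sum_mul, mul_add, ← sum_add_distrib]
  refine sum_congr rfl fun k _ => sum_congr rfl fun l _ => ?_
  ring

lemma sum_toeplitz_mul_cos {n : ℕ} (hn : n ≠ 0) (x : ℕ → ℝ) (θ : ℝ) :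
    ∑ k, ∑ l, toeplitz n x k l * cos (Nat.dist k l * θ)
      = n * (x 0 + ∑ j ∈ Ico 1 n, 2 * (1 - (j : ℝ) / n) * x j * cos (j * θ)) := by
  have hrange := sum_range_sum_range_dist n fun j => x j * cos (j * θ)
  simp only [← Fin.sum_univ_eq_sum_range] at hrange
  simp only [toeplitz, hrange, Nat.cast_zero, zero_mul, cos_zero, mul_one, nsmul_eq_mul,
    mul_add, mul_sum]
  congr 1
  refine sum_congr rfl fun j hj => ?_
  rw [Nat.cast_mul, Nat.cast_sub (mem_Ico.1 hj).2.le]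
  field_simp
  push_cast
  ring

lemma abs_fejerMean_le_opNorm_toeplitz {n : ℕ} (hn : n ≠ 0) (x : ℕ → ℝ) (θ : ℝ) :
    |x 0 + ∑ j ∈ Ico 1 n, 2 * (1 - (j : ℝ) / n) * x j * cos (j * θ)|
      ≤ opNorm (toeplitz n x) := by
  set L := LinearMap.toContinuousLinearMap (Matrix.toEuclideanLin (toeplitz n x))
  have hcos := abs_inner_self_apply_le L (cosVec n θ)
  have hsin := abs_inner_self_apply_le L (sinVec n θ)
  have hform : n * (x 0 + ∑ j ∈ Ico 1 n, 2 * (1 - (j : ℝ) / n) * x j * cos (j * θ))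
      = ⟪cosVec n θ, L (cosVec n θ)⟫ + ⟪sinVec n θ, L (sinVec n θ)⟫ :=
    (sum_toeplitz_mul_cos hn x θ).symm.trans (inner_cosVec_add_inner_sinVec _ θ).symm
  have hn' : (0 : ℝ) < n := by positivity
  refine le_of_mul_le_mul_left ?_ hn'
  calc n * |x 0 + ∑ j ∈ Ico 1 n, 2 * (1 - (j : ℝ) / n) * x j * cos (j * θ)|
      = |⟪cosVec n θ, L (cosVec n θ)⟫ + ⟪sinVec n θ, L (sinVec n θ)⟫| := by
        rw [← hform, abs_mul, abs_of_pos hn']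
    _ ≤ |⟪cosVec n θ, L (cosVec n θ)⟫| + |⟪sinVec n θ, L (sinVec n θ)⟫| := abs_add_le _ _
    _ ≤ ‖L‖ * ‖cosVec n θ‖ ^ 2 + ‖L‖ * ‖sinVec n θ‖ ^ 2 := add_le_add hcos hsin
    _ = n * ‖L‖ := by rw [← mul_add, norm_cosVec_sq_add_norm_sinVec_sq, mul_comm]

theorem stmt1 (n : ℕ) (hn : 0 < n) (x : ℕ → ℝ) :
    sSup ((fun t : ℝ =>
        |x 0 + ∑ j ∈ Finset.Ico 1 n,
          2 * (1 - (j : ℝ) / n) * x j * Real.cos (2 * Real.pi * j * t)|) ''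
          Set.Icc (0 : ℝ) 1) ≤ opNorm (toeplitz n x) := by
  refine Real.sSup_le ?_ (norm_nonneg _)
  rintro _ ⟨t, -, rfl⟩
  have h := abs_fejerMean_le_opNorm_toeplitz hn.ne' x (2 * π * t)
  simpa only [show ∀ j : ℝ, j * (2 * π * t) = 2 * π * j * t from fun j => by ring] using h
end

section
/- Let X_0, X_1, ... be i.i.d. with E X_0 = 0 and E X_0² < ∞, and let T_n' be the Toeplitz matrix generated by the truncated variables X_i' = X_i·1_{|X_i| ≤ √(i log i)}. Then |E‖T_n‖ − E‖T_n'‖| = o(√(n log n)) as n → ∞. -/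
/-!
The norm difference is at most the norm of the Toeplitz matrix generated by the truncation
errors `Xᵢ - Xᵢ'`, and by the Schur test a symmetric Toeplitz matrix has norm at most
`2 ∑ᵢ |xᵢ|`. Each error has expectation
`E[|X₀| 1{|X₀| > √(i log i)}] ≤ E[X₀²] / √(i log i) = O(1/√i)`,
so the difference of expected norms is `O(√n) = o(√(n log n))`.
-/

open MeasureTheory ProbabilityTheory Filter Real

open Finset

lemma norm_toEuclideanLin_le_of_sum_abs_le {ι : Type*} [Fintype ι] [DecidableEq ι]
    (A : Matrix ι ι ℝ) {R : ℝ} (hR : 0 ≤ R)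
    (hrow : ∀ i, ∑ j, |A i j| ≤ R) (hcol : ∀ j, ∑ i, |A i j| ≤ R) :
    ‖LinearMap.toContinuousLinearMap (Matrix.toEuclideanLin A)‖ ≤ R := by
  refine ContinuousLinearMap.opNorm_le_bound _ hR fun v => ?_
  -- Cauchy–Schwarz in each row, with weights `|A i j|`
  have hrow_sq (i : ι) : (∑ j, A i j * v j) ^ 2 ≤ R * ∑ j, |A i j| * v j ^ 2 :=
    (sum_sq_le_sum_mul_sum_of_sq_le_mul _ (fun _ _ => abs_nonneg _) (fun _ _ => by positivity)
      fun j _ => (by rw [← mul_assoc, abs_mul_abs_self]; ring : _ = _).le).trans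
      (mul_le_mul_of_nonneg_right (hrow i) (sum_nonneg fun _ _ => by positivity))
  refine le_of_pow_le_pow_left₀ two_ne_zero (by positivity) ?_
  calc ‖LinearMap.toContinuousLinearMap (Matrix.toEuclideanLin A) v‖ ^ 2
      = ∑ i, (∑ j, A i j * v j) ^ 2 := by
        simp [EuclideanSpace.norm_sq_eq, Matrix.mulVec, dotProduct]
    _ ≤ ∑ i, R * ∑ j, |A i j| * v j ^ 2 := sum_le_sum fun i _ => hrow_sq i
    _ = R * ∑ j, (∑ i, |A i j|) * v j ^ 2 := by
        rw [← mul_sum, sum_comm]; simp only [sum_mul]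
    _ ≤ R * ∑ j, R * v j ^ 2 := by gcongr with j; exact hcol j
    _ = (R * ‖v‖) ^ 2 := by
        rw [← mul_sum, ← mul_assoc, mul_pow, EuclideanSpace.norm_sq_eq, sq R]
        simp only [Real.norm_eq_abs, sq_abs]

lemma card_filter_dist_eq_le_two {n : ℕ} (i k : ℕ) : #{j : Fin n | Nat.dist i j = k} ≤ 2 := by
  calc #{j : Fin n | Nat.dist i j = k}
      ≤ #({i + k, i - k} : Finset ℕ) := by
        refine card_le_card_of_injOn Fin.val (fun j hj => ?_) Fin.val_injective.injOn
        simp only [coe_filter, mem_univ, true_and, Set.mem_ofPred_eq] at hj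
        simp only [coe_insert, coe_singleton, Set.mem_insert_iff, Set.mem_singleton_iff]
        unfold Nat.dist at hj
        omega
    _ ≤ 2 := card_le_two

lemma sum_abs_toeplitz_row_le {n : ℕ} (x : ℕ → ℝ) (i : Fin n) :
    ∑ j, |toeplitz n x i j| ≤ 2 * ∑ k ∈ range n, |x k| := by
  have himage : univ.image (fun j : Fin n => Nat.dist i j) ⊆ range n := by
    intro k hk
    obtain ⟨j, -, rfl⟩ := mem_image.1 hk
    have := i.isLt; have := j.isLt
    unfold Nat.dist
    exact mem_range.2 (by omega)
  calc ∑ j, |toeplitz n x i j|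
      = ∑ k ∈ univ.image (fun j : Fin n => Nat.dist i j),
          #{j : Fin n | Nat.dist i j = k} • |x k| :=
        sum_comp (fun k => |x k|) _
    _ ≤ ∑ k ∈ univ.image (fun j : Fin n => Nat.dist i j), 2 * |x k| :=
        sum_le_sum fun k _ => by
          rw [nsmul_eq_mul]; gcongr; exact_mod_cast card_filter_dist_eq_le_two i k
    _ ≤ ∑ k ∈ range n, 2 * |x k| :=
        sum_le_sum_of_subset_of_nonneg himage fun _ _ _ => by positivity
    _ = 2 * ∑ k ∈ range n, |x k| := (mul_sum ..).symm

lemma opNorm_toeplitz_le (n : ℕ) (x : ℕ → ℝ) :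
    opNorm (toeplitz n x) ≤ 2 * ∑ k ∈ range n, |x k| :=
  norm_toEuclideanLin_le_of_sum_abs_le _ (by positivity) (sum_abs_toeplitz_row_le x)
    fun j => by simpa only [toeplitz, Nat.dist_comm] using sum_abs_toeplitz_row_le x j

lemma opNorm_nonneg {n : ℕ} (A : Matrix (Fin n) (Fin n) ℝ) : 0 ≤ opNorm A :=
  norm_nonneg _

lemma toeplitz_sub (n : ℕ) (x y : ℕ → ℝ) :
    toeplitz n x - toeplitz n y = toeplitz n (x - y) :=
  rfl

lemma abs_opNorm_sub_opNorm_le {n : ℕ} (A B : Matrix (Fin n) (Fin n) ℝ) :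
    |opNorm A - opNorm B| ≤ opNorm (A - B) := by
  simpa only [opNorm, map_sub] using abs_norm_sub_norm_le _ _

lemma continuous_opNorm (n : ℕ) : Continuous (opNorm : Matrix (Fin n) (Fin n) ℝ → ℝ) := by
  unfold opNorm
  exact (LinearMap.continuous_of_finiteDimensional (Matrix.toEuclideanLin.trans
    LinearMap.toContinuousLinearMap : Matrix (Fin n) (Fin n) ℝ ≃ₗ[ℝ] _).toLinearMap).norm

section Expectation

variable {Ω : Type*} [MeasurableSpace Ω] {μ : Measure Ω}

lemma aestronglyMeasurable_opNorm_toeplitz {X : ℕ → Ω → ℝ} (hX : ∀ k, AEMeasurable (X k) μ)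
    (n : ℕ) : AEStronglyMeasurable (fun ω => opNorm (toeplitz n fun k => X k ω)) μ := by
  have hc : Continuous fun A : Fin n → Fin n → ℝ => opNorm (Matrix.of A) := continuous_opNorm n
  exact (hc.measurable.comp_aemeasurable <|
    aemeasurable_pi_lambda (fun ω (i j : Fin n) => X (Nat.dist i j) ω) fun i =>
      aemeasurable_pi_lambda _ fun j => hX _).aestronglyMeasurable

lemma integrable_opNorm_toeplitz {X : ℕ → Ω → ℝ} (hX : ∀ k, Integrable (X k) μ) (n : ℕ) :
    Integrable (fun ω => opNorm (toeplitz n fun k => X k ω)) μ := by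
  refine ((integrable_finsetSum (range n) fun k _ => (hX k).abs).const_mul 2).mono'
    (aestronglyMeasurable_opNorm_toeplitz (fun k => (hX k).aemeasurable) n)
    (ae_of_all _ fun ω => ?_)
  rw [Real.norm_of_nonneg (opNorm_nonneg _)]
  exact opNorm_toeplitz_le n _

lemma abs_integral_opNorm_toeplitz_sub_le {X Y : ℕ → Ω → ℝ} (hX : ∀ k, Integrable (X k) μ)
    (hY : ∀ k, Integrable (Y k) μ) (n : ℕ) :
    |∫ ω, opNorm (toeplitz n fun k => X k ω) ∂μ - ∫ ω, opNorm (toeplitz n fun k => Y k ω) ∂μ|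
      ≤ 2 * ∑ k ∈ range n, ∫ ω, |X k ω - Y k ω| ∂μ := by
  set TX := fun ω => opNorm (toeplitz n fun k => X k ω)
  set TY := fun ω => opNorm (toeplitz n fun k => Y k ω)
  have hXY (k : ℕ) : Integrable (fun ω => |X k ω - Y k ω|) μ := ((hX k).sub (hY k)).abs
  calc |∫ ω, TX ω ∂μ - ∫ ω, TY ω ∂μ| = |∫ ω, TX ω - TY ω ∂μ| := by
        rw [integral_sub (integrable_opNorm_toeplitz hX n) (integrable_opNorm_toeplitz hY n)]
    _ ≤ ∫ ω, |TX ω - TY ω| ∂μ := abs_integral_le_integral_abs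
    _ ≤ ∫ ω, 2 * ∑ k ∈ range n, |X k ω - Y k ω| ∂μ :=
        integral_mono ((integrable_opNorm_toeplitz hX n).sub (integrable_opNorm_toeplitz hY n)).abs
          ((integrable_finsetSum (range n) fun k _ => hXY k).const_mul 2)
          fun ω => (abs_opNorm_sub_opNorm_le _ _).trans <| by
            rw [toeplitz_sub]; exact opNorm_toeplitz_le n _
    _ = 2 * ∑ k ∈ range n, ∫ ω, |X k ω - Y k ω| ∂μ := by
        rw [integral_const_mul, integral_finsetSum _ fun k _ => hXY k]

end Expectation

/-- Unlike Mathlib's `ProbabilityTheory.truncation`, this keeps `x` on `[-t, t]`, not `(-t, t]`. -/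
noncomputable def truncateAbs (t x : ℝ) : ℝ := if |x| ≤ t then x else 0

lemma measurable_truncateAbs (t : ℝ) : Measurable (truncateAbs t) :=
  Measurable.ite (measurableSet_le measurable_abs measurable_const) measurable_id measurable_const

lemma measurable_abs_sub_truncateAbs (t : ℝ) : Measurable fun x => |x - truncateAbs t x| :=
  (measurable_id.sub (measurable_truncateAbs t)).abs

lemma abs_truncateAbs_le (t x : ℝ) : |truncateAbs t x| ≤ |x| := by
  unfold truncateAbs; split_ifs <;> simp

lemma _root_.MeasureTheory.Integrable.truncateAbs {Ω : Type*} [MeasurableSpace Ω]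
    {μ : Measure Ω} {Y : Ω → ℝ} (hY : Integrable Y μ) (t : ℝ) :
    Integrable (fun ω => truncateAbs t (Y ω)) μ :=
  hY.abs.mono' ((measurable_truncateAbs t).comp_aemeasurable hY.aemeasurable).aestronglyMeasurable
    (ae_of_all _ fun ω => abs_truncateAbs_le t (Y ω))

lemma abs_sub_truncateAbs_le (t x : ℝ) : |x - truncateAbs t x| ≤ |x| := by
  unfold truncateAbs; split_ifs <;> simp

lemma abs_sub_truncateAbs_le_sq_div {t : ℝ} (ht : 0 < t) (x : ℝ) :
    |x - truncateAbs t x| ≤ x ^ 2 / t := by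
  unfold truncateAbs
  split_ifs with hx
  · simp only [sub_self, abs_zero]; positivity
  · rw [sub_zero, le_div_iff₀ ht, ← sq_abs, sq]
    exact mul_le_mul_of_nonneg_left (not_le.1 hx).le (abs_nonneg x)

lemma sqrt_succ_le_two_mul_sqrt_mul_log {k : ℕ} (hk : 2 ≤ k) :
    √(k + 1) ≤ 2 * √(k * log k) := by
  have hk' : (2 : ℝ) ≤ k := by exact_mod_cast hk
  have hlog : 1 / 2 ≤ log k := by linarith [log_two_gt_d9, log_le_log two_pos hk']
  rw [show (2 : ℝ) = √4 by norm_num, ← sqrt_mul (by norm_num)]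
  exact sqrt_le_sqrt (by nlinarith)

lemma inv_sqrt_succ_le_two_mul_sub {x : ℝ} (hx : 0 ≤ x) :
    (√(x + 1))⁻¹ ≤ 2 * (√(x + 1) - √x) := by
  have ha := sq_sqrt (by linarith : 0 ≤ x + 1)
  have hb := sq_sqrt hx
  rw [inv_le_iff_one_le_mul₀ (by positivity)]
  nlinarith [sq_nonneg (√(x + 1) - √x)]

lemma sum_range_inv_sqrt_succ_le (n : ℕ) : ∑ k ∈ range n, (√(k + 1))⁻¹ ≤ 2 * √n := by
  calc ∑ k ∈ range n, (√(k + 1))⁻¹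
      ≤ ∑ k ∈ range n, 2 * (√((k + 1 : ℕ) : ℝ) - √(k : ℝ)) :=
        sum_le_sum fun k _ => by push_cast; exact inv_sqrt_succ_le_two_mul_sub k.cast_nonneg
    _ = 2 * √n := by rw [← mul_sum, sum_range_sub (fun k : ℕ => √(k : ℝ))]; simp

lemma isLittleO_sqrt_sqrt_mul_log :
    (fun n : ℕ => √n) =o[atTop] fun n : ℕ => √(n * log n) := by
  have hlog : (fun _ : ℕ => (1 : ℝ)) =o[atTop] fun n : ℕ => √(log n) :=
    (Asymptotics.isLittleO_one_left_iff ℝ).2 <| tendsto_norm_atTop_atTop.comp <|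
      tendsto_sqrt_atTop.comp <| tendsto_log_atTop.comp tendsto_natCast_atTop_atTop
  simpa [sqrt_mul (Nat.cast_nonneg _)] using
    (Asymptotics.isBigO_refl (fun n : ℕ => √n) atTop).mul_isLittleO hlog

section Truncation

variable {Ω : Type*} [MeasurableSpace Ω] {μ : Measure Ω} [IsProbabilityMeasure μ]

lemma integrable_of_integrable_sq {Y : Ω → ℝ} (hY : AEMeasurable Y μ)
    (hY2 : Integrable (fun ω => Y ω ^ 2) μ) : Integrable Y μ :=
  ((memLp_two_iff_integrable_sq hY.aestronglyMeasurable).2 hY2).integrable one_le_two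

lemma integral_abs_sub_truncateAbs_le {Y : Ω → ℝ} (hY : AEMeasurable Y μ)
    (hY2 : Integrable (fun ω => Y ω ^ 2) μ) (k : ℕ) :
    ∫ ω, |Y ω - truncateAbs √(k * log k) (Y ω)| ∂μ
      ≤ 2 * (∫ ω, |Y ω| ∂μ + ∫ ω, Y ω ^ 2 ∂μ) / √(k + 1) := by
  have hY1 := integrable_of_integrable_sq hY hY2
  have hint : Integrable (fun ω => |Y ω - truncateAbs √(k * log k) (Y ω)|) μ :=
    hY1.abs.mono' ((measurable_abs_sub_truncateAbs _).comp_aemeasurable hY).aestronglyMeasurable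
      (ae_of_all _ fun ω => by simpa using abs_sub_truncateAbs_le _ (Y ω))
  have h1 : 0 ≤ ∫ ω, |Y ω| ∂μ := integral_nonneg fun ω => abs_nonneg (Y ω)
  have h2 : 0 ≤ ∫ ω, Y ω ^ 2 ∂μ := integral_nonneg fun ω => sq_nonneg (Y ω)
  rw [le_div_iff₀ (by positivity)]
  rcases lt_or_ge k 2 with hk | hk
  · have hsqrt : √(k + 1) ≤ 2 := sqrt_le_iff.2 ⟨by norm_num, by
      have : (k : ℝ) ≤ 1 := by exact_mod_cast Nat.lt_succ_iff.1 hk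
      linarith⟩
    calc (∫ ω, |Y ω - truncateAbs √(k * log k) (Y ω)| ∂μ) * √(k + 1)
        ≤ (∫ ω, |Y ω| ∂μ) * 2 :=
          mul_le_mul (integral_mono hint hY1.abs fun ω => abs_sub_truncateAbs_le _ _) hsqrt
            (sqrt_nonneg _) h1
      _ ≤ 2 * (∫ ω, |Y ω| ∂μ + ∫ ω, Y ω ^ 2 ∂μ) := by linarith
  · have ht : 0 < √(k * log k) := by
      have := sqrt_succ_le_two_mul_sqrt_mul_log hk
      have : 0 < √((k : ℝ) + 1) := by positivity
      linarith
    calc (∫ ω, |Y ω - truncateAbs √(k * log k) (Y ω)| ∂μ) * √(k + 1)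
        ≤ ((∫ ω, Y ω ^ 2 ∂μ) / √(k * log k)) * (2 * √(k * log k)) := by
          refine mul_le_mul ?_ (sqrt_succ_le_two_mul_sqrt_mul_log hk) (sqrt_nonneg _)
            (by positivity)
          rw [← integral_div]
          exact integral_mono hint (hY2.div_const _) fun ω => abs_sub_truncateAbs_le_sq_div ht _
      _ = 2 * ∫ ω, Y ω ^ 2 ∂μ := by field_simp
      _ ≤ 2 * (∫ ω, |Y ω| ∂μ + ∫ ω, Y ω ^ 2 ∂μ) := by linarith

lemma sum_integral_abs_sub_truncateAbs_le {X : ℕ → Ω → ℝ}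
    (hident : ∀ k, IdentDistrib (X k) (X 0) μ μ) (hL2 : Integrable (fun ω => X 0 ω ^ 2) μ)
    (n : ℕ) :
    ∑ k ∈ range n, ∫ ω, |X k ω - truncateAbs √(k * log k) (X k ω)| ∂μ
      ≤ 4 * (∫ ω, |X 0 ω| ∂μ + ∫ ω, X 0 ω ^ 2 ∂μ) * √n := by
  set C := ∫ ω, |X 0 ω| ∂μ + ∫ ω, X 0 ω ^ 2 ∂μ
  have hC : 0 ≤ C := add_nonneg (integral_nonneg fun ω => abs_nonneg _)
    (integral_nonneg fun ω => sq_nonneg _)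
  calc ∑ k ∈ range n, ∫ ω, |X k ω - truncateAbs √(k * log k) (X k ω)| ∂μ
      ≤ ∑ k ∈ range n, 2 * C / √(k + 1) := sum_le_sum fun k _ =>
        ((hident k).comp (measurable_abs_sub_truncateAbs _)).integral_eq.trans_le
          (integral_abs_sub_truncateAbs_le (hident 0).aemeasurable_fst hL2 k)
    _ = 2 * C * ∑ k ∈ range n, (√(k + 1))⁻¹ := by simp_rw [div_eq_mul_inv, ← mul_sum]
    _ ≤ 2 * C * (2 * √n) := by gcongr; exact sum_range_inv_sqrt_succ_le n
    _ = 4 * C * √n := by ring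

end Truncation

open Asymptotics in
theorem stmt9_general {Ω : Type*} [MeasurableSpace Ω] (μ : Measure Ω) [IsProbabilityMeasure μ]
    (X : ℕ → Ω → ℝ)
    (hident : ∀ i, IdentDistrib (X i) (X 0) μ μ)
    (hL2 : Integrable (fun ω => (X 0 ω) ^ 2) μ)
    (X' : ℕ → Ω → ℝ)
    (hX' : ∀ i ω, X' i ω = if |X i ω| ≤ Real.sqrt (i * Real.log i) then X i ω else 0) :
    (fun n : ℕ =>
        |μ[fun ω => opNorm (toeplitz n (fun i => X i ω))] -
          μ[fun ω => opNorm (toeplitz n (fun i => X' i ω))]|)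
      =o[atTop] fun n : ℕ => Real.sqrt (n * Real.log n) := by
  obtain rfl : X' = fun (i : ℕ) ω => truncateAbs √(i * log i) (X i ω) := funext₂ hX'
  have hX (k : ℕ) : Integrable (X k) μ := (hident k).integrable_iff.2 <|
    integrable_of_integrable_sq (hident 0).aemeasurable_fst hL2
  refine (IsBigO.of_bound (2 * (4 * (∫ ω, |X 0 ω| ∂μ + ∫ ω, X 0 ω ^ 2 ∂μ)))
    (Eventually.of_forall fun n => ?_)).trans_isLittleO isLittleO_sqrt_sqrt_mul_log
  rw [Real.norm_of_nonneg (abs_nonneg _), Real.norm_of_nonneg (sqrt_nonneg _), mul_assoc]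
  exact (abs_integral_opNorm_toeplitz_sub_le hX (fun k => (hX k).truncateAbs _) n).trans <| by
    gcongr; exact sum_integral_abs_sub_truncateAbs_le hident hL2 n

open Asymptotics in
theorem stmt9 {Ω : Type*} [MeasurableSpace Ω] (μ : Measure Ω) [IsProbabilityMeasure μ]
    (X : ℕ → Ω → ℝ) (hmeas : ∀ i, Measurable (X i))
    (hindep : iIndepFun X μ)
    (hident : ∀ i, IdentDistrib (X i) (X 0) μ μ)
    (hmean : μ[X 0] = 0)
    (hL2 : Integrable (fun ω => (X 0 ω) ^ 2) μ)
    (X' : ℕ → Ω → ℝ)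
    (hX' : ∀ i ω, X' i ω = if |X i ω| ≤ Real.sqrt (i * Real.log i) then X i ω else 0) :
    (fun n : ℕ =>
        |μ[fun ω => opNorm (toeplitz n (fun i => X i ω))] -
          μ[fun ω => opNorm (toeplitz n (fun i => X' i ω))]|)
      =o[atTop] fun n : ℕ => Real.sqrt (n * Real.log n) :=
  stmt9_general μ X hident hL2 X' hX'
end

section
/- For α > 1, if X_0, X_1, ... are independent with sup_n E[X_n²·(log log(|X_n| ∨ e^e))^α] = C₁ < ∞, then for every θ > 1 there is a constant C₂ with E max_{i < θ^{k+1}} X_i² ≤ K + C₂·θ^{k+1}/(log k)^α for large k, and consequently Σ_k (E max_{i<θ^{k+1}} X_i²)/(θ^k·k) < ∞. -/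
/-!
Let `L(x) = log log (|x| ∨ e^e)`, so `L ≥ 1` and `L` is nondecreasing in `|x|`. For any level
`s ≥ 0`, each `x²` is either at most `s²` or, when `|x| > s`, at most `x² L(x)^α / L(s)^α`; hence
`max_{i<N} X_i² ≤ s² + Σ_{i<N} X_i² L(X_i)^α / L(s)^α` and `E max_{i<N} X_i² ≤ s² + N C₁ / L(s)^α`.
Taking `N = ⌈θ^{k+1}⌉` and `s = exp √k` gives `L(s)^α = (log k / 2)^α` while
`s² = exp (2√k)` is eventually below `θ^{k+1} / (log k)^α`. After division by `θ^k k` the bound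
is dominated by a geometric series plus the Bertrand series `Σ 1 / (k (log k)^α)`, which
converges for `α > 1` by Cauchy condensation.
-/

open MeasureTheory ProbabilityTheory Filter Real

lemma summable_inv_mul_log_rpow {a : ℝ} (ha : 1 < a) :
    Summable fun n : ℕ => ((n : ℝ) * log n ^ a)⁻¹ := by
  have ha0 : 0 ≤ a := by linarith
  -- The `n = 1` term is a junk zero (`log 1 = 0`), which breaks antitonicity; shift it away.
  rw [← summable_nat_add_iff 1]
  set f : ℕ → ℝ := fun n => (((n + 1 : ℕ) : ℝ) * log (n + 1 : ℕ) ^ a)⁻¹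
  have hlog : ∀ n : ℕ, 0 < log (n + 1 + 1 : ℕ) := fun n =>
    log_pos (by push_cast; linarith [n.cast_nonneg (α := ℝ)])
  have f_antitone : ∀ ⦃m n : ℕ⦄, 0 < m → m ≤ n → f n ≤ f m := by
    intro m n hm hmn
    obtain ⟨m, rfl⟩ := Nat.exists_eq_add_one_of_ne_zero hm.ne'
    have : ((m + 1 + 1 : ℕ) : ℝ) ≤ (n + 1 : ℕ) := by exact_mod_cast Nat.succ_le_succ hmn
    unfold f
    have := hlog m
    gcongr
  refine (summable_condensed_iff_of_nonneg (fun n => by positivity) f_antitone).1 ?_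
  refine .of_norm_bounded_eventually_nat ((summable_nat_rpow_inv.2 ha).mul_left (log 2 ^ a)⁻¹) ?_
  filter_upwards [eventually_ge_atTop 1] with k hk
  have hpos : 0 < log ((2 : ℝ) ^ k) := log_pos (one_lt_pow₀ one_lt_two (by omega))
  calc ‖(2 : ℝ) ^ k * f (2 ^ k)‖ = (2 : ℝ) ^ k / (2 ^ k + 1) * (log (2 ^ k + 1) ^ a)⁻¹ := by
        unfold f
        rw [Real.norm_of_nonneg (by positivity)]
        push_cast
        field_simp
    _ ≤ 1 * (log (2 ^ k) ^ a)⁻¹ := by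
        have : 0 < log ((2 : ℝ) ^ k + 1) := log_pos (by linarith [pow_pos (two_pos (α := ℝ)) k])
        gcongr
        · rw [div_le_one (by positivity)]; linarith
        · linarith
    _ = (log 2 ^ a)⁻¹ * ((k : ℝ) ^ a)⁻¹ := by
        rw [one_mul, log_pow, mul_rpow (Nat.cast_nonneg k) (log_nonneg one_le_two), mul_inv,
          mul_comm]

noncomputable def logLogMax (x : ℝ) : ℝ := log (log (max |x| (exp (exp 1))))

lemma exp_one_le_log_max_abs (x : ℝ) : exp 1 ≤ log (max |x| (exp (exp 1))) :=
  (log_exp (exp 1)).symm.le.trans (log_le_log (exp_pos _) (le_max_right _ _))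

lemma one_le_logLogMax (x : ℝ) : 1 ≤ logLogMax x :=
  (log_exp 1).symm.le.trans (log_le_log (exp_pos 1) (exp_one_le_log_max_abs x))

lemma logLogMax_pos (x : ℝ) : 0 < logLogMax x := one_pos.trans_le (one_le_logLogMax x)

lemma logLogMax_le_logLogMax {x y : ℝ} (h : |x| ≤ |y|) : logLogMax x ≤ logLogMax y :=
  log_le_log ((exp_pos 1).trans_le (exp_one_le_log_max_abs x))
    (log_le_log (by positivity) (max_le_max_right _ h))

lemma logLogMax_exp {t : ℝ} (ht : exp 1 ≤ t) : logLogMax (exp t) = log t := by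
  rw [logLogMax, abs_of_pos (exp_pos t), max_eq_left (exp_le_exp.2 ht), log_exp]

lemma sq_le_sq_add_mul_logLogMax_rpow_div {α : ℝ} (hα : 0 ≤ α) (x : ℝ) {s : ℝ} (hs : 0 ≤ s) :
    x ^ 2 ≤ s ^ 2 + x ^ 2 * logLogMax x ^ α / logLogMax s ^ α := by
  have hpos : 0 < logLogMax s ^ α := rpow_pos_of_pos (logLogMax_pos s) α
  rcases le_or_gt |x| s with hxs | hsx
  · have : x ^ 2 ≤ s ^ 2 := sq_le_sq' (abs_le.1 hxs).1 (abs_le.1 hxs).2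
    have : 0 ≤ x ^ 2 * logLogMax x ^ α / logLogMax s ^ α :=
      div_nonneg (mul_nonneg (sq_nonneg x) (rpow_nonneg (logLogMax_pos x).le α)) hpos.le
    linarith
  · have hmono : logLogMax s ^ α ≤ logLogMax x ^ α :=
      rpow_le_rpow (logLogMax_pos s).le
        (logLogMax_le_logLogMax (by rw [abs_of_nonneg hs]; exact hsx.le)) hα
    have : x ^ 2 ≤ x ^ 2 * logLogMax x ^ α / logLogMax s ^ α := by
      rw [le_div_iff₀ hpos]; exact mul_le_mul_of_nonneg_left hmono (sq_nonneg x)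
    linarith [sq_nonneg s]

lemma biSup_sq_le {ι : Type*} {α : ℝ} (hα : 0 ≤ α) (S : Finset ι) (x : ι → ℝ) {s : ℝ} (hs : 0 ≤ s) :
    ⨆ i ∈ S, x i ^ 2 ≤ s ^ 2 + (∑ i ∈ S, x i ^ 2 * logLogMax (x i) ^ α) / logLogMax s ^ α := by
  have hterm : ∀ i, 0 ≤ x i ^ 2 * logLogMax (x i) ^ α := fun i =>
    mul_nonneg (sq_nonneg _) (rpow_nonneg (logLogMax_pos _).le α)
  have hden : 0 ≤ logLogMax s ^ α := rpow_nonneg (logLogMax_pos s).le α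
  have hrhs : 0 ≤ s ^ 2 + (∑ i ∈ S, x i ^ 2 * logLogMax (x i) ^ α) / logLogMax s ^ α :=
    add_nonneg (sq_nonneg s) (div_nonneg (Finset.sum_nonneg fun i _ => hterm i) hden)
  refine Real.iSup_le (fun i => Real.iSup_le (fun hi => ?_) hrhs) hrhs
  calc x i ^ 2 ≤ s ^ 2 + x i ^ 2 * logLogMax (x i) ^ α / logLogMax s ^ α :=
        sq_le_sq_add_mul_logLogMax_rpow_div hα (x i) hs
    _ ≤ _ := by
        gcongr
        exact Finset.single_le_sum (fun j _ => hterm j) hi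

lemma integral_biSup_sq_le {Ω ι : Type*} [MeasurableSpace Ω] {μ : Measure Ω}
    [IsProbabilityMeasure μ] {α : ℝ} (hα : 0 ≤ α) {X : ι → Ω → ℝ}
    (hint : ∀ i, Integrable (fun ω => X i ω ^ 2 * logLogMax (X i ω) ^ α) μ) {C : ℝ}
    (hC : ∀ i, μ[fun ω => X i ω ^ 2 * logLogMax (X i ω) ^ α] ≤ C) (S : Finset ι)
    {s : ℝ} (hs : 0 ≤ s) :
    μ[fun ω => ⨆ i ∈ S, X i ω ^ 2] ≤ s ^ 2 + S.card * C / logLogMax s ^ α := by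
  have hsum : Integrable (fun ω => ∑ i ∈ S, X i ω ^ 2 * logLogMax (X i ω) ^ α) μ :=
    integrable_finsetSum S fun i _ => hint i
  calc μ[fun ω => ⨆ i ∈ S, X i ω ^ 2]
      ≤ μ[fun ω => s ^ 2 + (∑ i ∈ S, X i ω ^ 2 * logLogMax (X i ω) ^ α) / logLogMax s ^ α] := by
        refine integral_mono_of_nonneg (ae_of_all _ fun ω => ?_)
          ((integrable_const _).add (hsum.div_const _)) (ae_of_all _ fun ω => ?_)
        · exact Real.iSup_nonneg fun i => Real.iSup_nonneg fun _ => sq_nonneg _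
        · exact biSup_sq_le hα S (X · ω) hs
    _ = s ^ 2 + (∑ i ∈ S, μ[fun ω => X i ω ^ 2 * logLogMax (X i ω) ^ α]) / logLogMax s ^ α := by
        rw [integral_add (integrable_const _) (hsum.div_const _), integral_const, integral_div,
          integral_finsetSum S fun i _ => hint i, probReal_univ, one_smul]
    _ ≤ s ^ 2 + S.card * C / logLogMax s ^ α := by
        have := logLogMax_pos s
        gcongr
        simpa using Finset.sum_le_sum fun i (_ : i ∈ S) => hC i

lemma eventually_exp_two_mul_sqrt_le {θ α : ℝ} (hθ : 1 < θ) (hα : 0 ≤ α) :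
    ∀ᶠ k : ℕ in atTop, exp (2 * √k) ≤ θ ^ (k + 1) / log k ^ α := by
  have hc : 0 < log θ := log_pos hθ
  filter_upwards [(tendsto_sqrt_atTop.comp tendsto_natCast_atTop_atTop).eventually_ge_atTop
    ((2 + 2 * α) / log θ), eventually_ge_atTop 2] with k hsqrt hk
  replace hsqrt : 2 + 2 * α ≤ √k * log θ := (div_le_iff₀ hc).1 hsqrt
  have hk1 : (1 : ℝ) < k := by exact_mod_cast hk
  have hlogk : 0 < log k := log_pos hk1
  have hsqrt_pos : 0 < √(k : ℝ) := sqrt_pos.2 (by linarith)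
  have hlog_le : log k ≤ 2 * √k := by
    have := log_le_sub_one_of_pos hsqrt_pos
    rw [log_sqrt (by linarith)] at this
    linarith
  have hloglog_le : log (log k) ≤ 2 * √k := by linarith [log_le_sub_one_of_pos hlogk]
  rw [le_div_iff₀ (rpow_pos_of_pos hlogk α), rpow_def_of_pos hlogk, ← exp_add,
    ← exp_log (pow_pos (by linarith) (k + 1)), log_pow, exp_le_exp]
  push_cast
  nlinarith [mul_self_sqrt (show (0 : ℝ) ≤ k by linarith), mul_le_mul_of_nonneg_left hloglog_le hα]

lemma eventually_integral_biSup_sq_le {Ω : Type*} [MeasurableSpace Ω] {μ : Measure Ω}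
    [IsProbabilityMeasure μ] {α : ℝ} (hα : 0 ≤ α) {X : ℕ → Ω → ℝ}
    (hint : ∀ n, Integrable (fun ω => X n ω ^ 2 * logLogMax (X n ω) ^ α) μ) {C : ℝ}
    (hC : ∀ n, μ[fun ω => X n ω ^ 2 * logLogMax (X n ω) ^ α] ≤ C) {θ : ℝ} (hθ : 1 < θ) :
    ∀ᶠ k : ℕ in atTop, μ[fun ω => ⨆ i ∈ Finset.range ⌈θ ^ (k + 1)⌉₊, X i ω ^ 2] ≤
      2 ^ α * C + (1 + 2 ^ α * C) * θ ^ (k + 1) / log k ^ α := by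
  have hC0 : 0 ≤ C := (integral_nonneg fun ω => mul_nonneg (sq_nonneg _)
    (rpow_nonneg (logLogMax_pos _).le α)).trans (hC 0)
  filter_upwards [eventually_exp_two_mul_sqrt_le hθ hα, eventually_ge_atTop 8] with k hexp hk
  have hk8 : (8 : ℝ) ≤ k := by exact_mod_cast hk
  have hlogk : 1 ≤ log k := by
    rw [← log_exp 1]; exact log_le_log (exp_pos 1) (by linarith [exp_one_lt_d9])
  have hthreshold : logLogMax (exp √k) = log k / 2 := by
    rw [logLogMax_exp (le_sqrt_of_sq_le (by nlinarith [exp_one_lt_d9, exp_pos 1])),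
      log_sqrt (by linarith)]
  have hN : (⌈θ ^ (k + 1)⌉₊ : ℝ) ≤ θ ^ (k + 1) + 1 :=
    (Nat.ceil_lt_add_one (pow_pos (by linarith) _).le).le
  have hlogk_rpow : 1 ≤ log k ^ α := one_le_rpow hlogk hα
  calc μ[fun ω => ⨆ i ∈ Finset.range ⌈θ ^ (k + 1)⌉₊, X i ω ^ 2]
      ≤ exp √k ^ 2 + (Finset.range ⌈θ ^ (k + 1)⌉₊).card * C / logLogMax (exp √k) ^ α :=
        integral_biSup_sq_le hα hint hC _ (exp_pos _).le
    _ = exp (2 * √k) + 2 ^ α * C * ⌈θ ^ (k + 1)⌉₊ / log k ^ α := by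
        rw [hthreshold, div_rpow (by linarith) zero_le_two, Finset.card_range, ← exp_nat_mul]
        push_cast
        field_simp
    _ ≤ θ ^ (k + 1) / log k ^ α + 2 ^ α * C * (θ ^ (k + 1) + 1) / log k ^ α := by gcongr
    _ ≤ 2 ^ α * C + (1 + 2 ^ α * C) * θ ^ (k + 1) / log k ^ α := by
        have : 2 ^ α * C / log k ^ α ≤ 2 ^ α * C := div_le_self (by positivity) hlogk_rpow
        rw [mul_add, add_div, add_mul, add_div, mul_one, one_mul]
        linarith

lemma summable_div_pow_mul_of_eventually_le {a : ℕ → ℝ} (ha : ∀ k, 0 ≤ a k) {θ α K C : ℝ}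
    (hθ : 1 < θ) (hα : 1 < α) (h : ∀ᶠ k : ℕ in atTop, a k ≤ K + C * θ ^ (k + 1) / log k ^ α) :
    Summable fun k : ℕ => a k / (θ ^ k * k) := by
  have hθ0 : 0 < θ := by linarith
  have hgeom : Summable fun k : ℕ => θ⁻¹ ^ k :=
    summable_geometric_of_lt_one (by positivity) (inv_lt_one_of_one_lt₀ hθ)
  refine .of_norm_bounded_eventually_nat
    ((hgeom.mul_left |K|).add ((summable_inv_mul_log_rpow hα).mul_left (C * θ))) ?_
  filter_upwards [h, eventually_ge_atTop 1] with k hk hk1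
  have hk1' : (1 : ℝ) ≤ k := by exact_mod_cast hk1
  have hθk : 0 < θ ^ k := pow_pos hθ0 k
  rw [Real.norm_of_nonneg (div_nonneg (ha k) (by positivity))]
  calc a k / (θ ^ k * k) ≤ (|K| + C * θ ^ (k + 1) / log k ^ α) / (θ ^ k * k) := by
        gcongr
        exact hk.trans (by gcongr; exact le_abs_self K)
    _ = |K| / (θ ^ k * k) + C * θ * ((k : ℝ) * log k ^ α)⁻¹ := by
        rw [add_div, pow_succ]
        field_simp
    _ ≤ |K| * θ⁻¹ ^ k + C * θ * ((k : ℝ) * log k ^ α)⁻¹ := by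
        gcongr ?_ + _
        rw [inv_pow, ← div_eq_mul_inv]
        exact div_le_div_of_nonneg_left (abs_nonneg K) hθk (le_mul_of_one_le_right hθk.le hk1')

theorem stmt17_general {Ω : Type*} [MeasurableSpace Ω] (μ : Measure Ω) [IsProbabilityMeasure μ]
    (α : ℝ) (hα : 1 < α)
    (X : ℕ → Ω → ℝ)
    (hint : ∀ n, Integrable
      (fun ω => X n ω ^ 2 * Real.log (Real.log (max |X n ω| (Real.exp (Real.exp 1)))) ^ α) μ)
    (C₁ : ℝ)
    (hC₁ : ∀ n, μ[fun ω =>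
      X n ω ^ 2 * Real.log (Real.log (max |X n ω| (Real.exp (Real.exp 1)))) ^ α] ≤ C₁) :
    ∀ θ : ℝ, 1 < θ →
      (∃ K C₂ : ℝ, ∃ k₀ : ℕ, ∀ k ≥ k₀,
        μ[fun ω => ⨆ i ∈ Finset.range ⌈θ ^ (k + 1)⌉₊, X i ω ^ 2] ≤
          K + C₂ * θ ^ (k + 1) / Real.log k ^ α) ∧
      Summable (fun k : ℕ =>
        μ[fun ω => ⨆ i ∈ Finset.range ⌈θ ^ (k + 1)⌉₊, X i ω ^ 2] / (θ ^ k * k)) := by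
  intro θ hθ
  have hbound := eventually_integral_biSup_sq_le (α := α) (by linarith) hint hC₁ hθ
  refine ⟨⟨_, _, eventually_atTop.1 hbound⟩,
    summable_div_pow_mul_of_eventually_le (fun k => ?_) hθ hα hbound⟩
  exact integral_nonneg fun ω => Real.iSup_nonneg fun i => Real.iSup_nonneg fun _ => sq_nonneg _

theorem stmt17 {Ω : Type*} [MeasurableSpace Ω] (μ : Measure Ω) [IsProbabilityMeasure μ]
    (α : ℝ) (hα : 1 < α)
    (X : ℕ → Ω → ℝ) (hmeas : ∀ i, Measurable (X i))
    (hindep : iIndepFun X μ)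
    (hint : ∀ n, Integrable
      (fun ω => X n ω ^ 2 * Real.log (Real.log (max |X n ω| (Real.exp (Real.exp 1)))) ^ α) μ)
    (C₁ : ℝ)
    (hC₁ : ∀ n, μ[fun ω =>
      X n ω ^ 2 * Real.log (Real.log (max |X n ω| (Real.exp (Real.exp 1)))) ^ α] ≤ C₁) :
    ∀ θ : ℝ, 1 < θ →
      (∃ K C₂ : ℝ, ∃ k₀ : ℕ, ∀ k ≥ k₀,
        μ[fun ω => ⨆ i ∈ Finset.range ⌈θ ^ (k + 1)⌉₊, X i ω ^ 2] ≤
          K + C₂ * θ ^ (k + 1) / Real.log k ^ α) ∧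
      Summable (fun k : ℕ =>
        μ[fun ω => ⨆ i ∈ Finset.range ⌈θ ^ (k + 1)⌉₊, X i ω ^ 2] / (θ ^ k * k)) :=
  stmt17_general μ α hα X hint C₁ hC₁
end
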